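/- The folding dynamics G is strongly transitive on the phase space X = 𝔠_N × ⟦−N,N⟧^ℕ: for all points X_A, X_B ∈ X and every r > 0, there exist a point X ∈ X with d(X, X_A) ≤ r and an integer n ∈ ℕ such that G^n(X) = X_B. -/

import Mathlib

open scoped BigOperators

namespace HP

/-- A conformation of `N+1` residues in absolute encoding
(the initial residue, always `0`, is omitted): `C k` is the paper's `C_{k+1}`. -/
abbrev Conf (N : ℕ) := Fin N → ZMod 4

open Classical in
/-- `δ(a,b) = 0` if `a = b`, `1` otherwise. -/
noncomputable def delta {α : Type*} (a b : α) : ℝ := if a = b then 0 else 1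

/-- `d_C(C,Č) = Σ_{k=1}^N δ(C_k,Č_k)·2^{N−k}`. -/
noncomputable def dC (N : ℕ) (C C' : Conf N) : ℝ :=
  ∑ k : Fin N, delta (C k) (C' k) * (2 : ℝ) ^ (N - 1 - (k : ℕ))

/-- `d_F(F,F̌) = (9/(2N))·Σ_{k=0}^∞ |F^k − F̌^k|/10^{k+1}`. -/
noncomputable def dF (N : ℕ) (F F' : ℕ → ℤ) : ℝ :=
  (9 / (2 * (N : ℝ))) * ∑' k : ℕ, |((F k : ℝ)) - ((F' k : ℝ))| / 10 ^ (k + 1)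

/-- `d((C,F),(Č,F̌)) = d_C(C,Č) + d_F(F,F̌)`. -/
noncomputable def distX (N : ℕ) (X Y : Conf N × (ℕ → ℤ)) : ℝ :=
  dC N X.1 Y.1 + dF N X.2 Y.2

/-- A folding sequence takes values in `⟦−N,N⟧`. -/
def validSeq (N : ℕ) (F : ℕ → ℤ) : Prop := ∀ k, |F k| ≤ (N : ℤ)

/-- The fold map `f_k`: residues with (paper) index `≥ |k|` are rotated by
`f^{sign k}` where `f x = x + 1` (in `ℤ/4ℤ`); `f_0 = id`. -/
def foldMap (N : ℕ) (k : ℤ) (C : Conf N) : Conf N :=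
  fun j => if ((j : ℕ) : ℤ) + 1 < |k| then C j else C j + (Int.sign k : ZMod 4)

/-- The folding dynamics `G(C,F) = (f_{i(F)}(C), σ(F))`. -/
def G (N : ℕ) : Conf N × (ℕ → ℤ) → Conf N × (ℕ → ℤ) :=
  fun X => (foldMap N (X.2 0) X.1, fun n => X.2 (n + 1))

/-- The shift `σ` on folding sequences. -/
def shiftF (F : ℕ → ℤ) : ℕ → ℤ := fun k => F (k + 1)

/-- Unit move in the 2D lattice associated with an absolute encoding letter. -/
def step (c : ZMod 4) : ℤ × ℤ :=
  if c = 0 then (1, 0) else if c = 1 then (0, -1) else if c = 2 then (-1, 0) else (0, 1)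

/-- `pos N C i` is the lattice point `X_i` of the 2D representation `p(C)`. -/
def pos (N : ℕ) (C : Conf N) : ℕ → ℤ × ℤ
  | 0 => (0, 0)
  | i + 1 => pos N C i + (if h : i < N then step (C ⟨i, h⟩) else 0)

/-- The SAW requirement: the lattice points `X_0, …, X_N` are pairwise distinct. -/
def SAW (N : ℕ) (C : Conf N) : Prop :=
  ∀ i j : ℕ, i ≤ N → j ≤ N → pos N C i = pos N C j → i = j

/-- Successive application of fold maps `f_{k_1}, …, f_{k_n}`. -/
def folds (N : ℕ) : Conf N → List ℤ → Conf N
  | C, [] => C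
  | C, k :: t => folds N (foldMap N k C) t

/-- The set `𝔠_N` of acceptable conformations: obtained from `(0,…,0)` by a
nonempty sequence of folds in `⟦−N,N⟧`, all intermediate conformations
(including the initial and final ones) satisfying the SAW requirement. -/
def acceptable (N : ℕ) (C : Conf N) : Prop :=
  ∃ L : List ℤ, L ≠ [] ∧ (∀ k ∈ L, |k| ≤ (N : ℤ)) ∧
    folds N (fun _ => 0) L = C ∧
    ∀ p : List ℤ, p <+: L → SAW N (folds N (fun _ => 0) p)

/-- Membership in the phase space `X = 𝔠_N × ⟦−N,N⟧^ℕ`. -/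
def inX (N : ℕ) (X : Conf N × (ℕ → ℤ)) : Prop :=
  acceptable N X.1 ∧ validSeq N X.2

/-- `U` is open in the metric space `(X, d)` (relative topology on `𝔠_N × ⟦−N,N⟧^ℕ`). -/
def openIn (N : ℕ) (U : Set (Conf N × (ℕ → ℤ))) : Prop :=
  ∀ x ∈ U, ∃ ε > (0 : ℝ), ∀ y, inX N y → distX N x y < ε → y ∈ U

/-- `A` is closed in the metric space `(X, d)` (relative topology). -/
def closedIn (N : ℕ) (A : Set (Conf N × (ℕ → ℤ))) : Prop :=
  ∀ x, inX N x → x ∉ A → ∃ ε > (0 : ℝ), ∀ y, inX N y → distX N x y < ε → y ∉ A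

/-
The conformation component of a point of `X` is never required to stay self-avoiding along
its orbit: only its own history matters. So keep `C_A`, keep the first `m` fold indices of
`F_A` (which makes `d_F` at most `10^{-m}`), then append folds carrying the current
conformation to `C_B` — folding `a` times at `s + 1` adds `a` to the residues from `s` on,
which corrects the residues one by one from the left — and finally append `F_B`.
-/

lemma folds_append (N : ℕ) (C : Conf N) (L₁ L₂ : List ℤ) :
    folds N C (L₁ ++ L₂) = folds N (folds N C L₁) L₂ := by
  induction L₁ generalizing C with
  | nil => rfl
  | cons k L ih => exact ih _

lemma folds_replicate_natCast_add_one (N s a : ℕ) (C : Conf N) :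
    folds N C (List.replicate a ((s : ℤ) + 1)) =
      fun j : Fin N => if (j : ℕ) < s then C j else C j + a := by
  induction a generalizing C with
  | zero => funext j; simp [folds]
  | succ a ih =>
    funext j
    rw [List.replicate_succ, folds, ih]
    have hs : |(s : ℤ) + 1| = s + 1 := abs_of_pos (by positivity)
    by_cases hj : (j : ℕ) < s
    · simp [foldMap, hs, hj]
    · simp only [foldMap, hs, hj, if_false, add_lt_add_iff_right, Nat.cast_lt,
        Int.sign_eq_one_of_pos (by positivity : (0 : ℤ) < s + 1)]
      push_cast
      ring

lemma exists_folds_eqOn_lt (N : ℕ) (D E : Conf N) :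
    ∀ s ≤ N, ∃ L : List ℤ, (∀ k ∈ L, |k| ≤ (N : ℤ)) ∧
      ∀ j : Fin N, (j : ℕ) < s → folds N D L j = E j := by
  intro s
  induction s with
  | zero => exact fun _ => ⟨[], by simp, by simp⟩
  | succ s ih =>
    intro hs
    obtain ⟨L, hL, hLE⟩ := ih (by omega)
    let a := (E ⟨s, hs⟩ - folds N D L ⟨s, hs⟩).val
    refine ⟨L ++ List.replicate a ((s : ℤ) + 1), ?_, fun j hj => ?_⟩
    · intro k hk
      rcases List.mem_append.1 hk with hk | hk
      · exact hL k hk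
      · rw [List.eq_of_mem_replicate hk, abs_of_pos (by positivity)]
        omega
    · rw [folds_append, folds_replicate_natCast_add_one]
      by_cases hjs : (j : ℕ) < s
      · simp only [hjs, if_true]
        exact hLE j hjs
      · obtain rfl : j = ⟨s, hs⟩ := Fin.ext (by simp only; omega)
        simp [a]

lemma exists_folds_eq (N : ℕ) (D E : Conf N) :
    ∃ L : List ℤ, (∀ k ∈ L, |k| ≤ (N : ℤ)) ∧ folds N D L = E := by
  obtain ⟨L, hL, hLE⟩ := exists_folds_eqOn_lt N D E N le_rfl
  exact ⟨L, hL, funext fun j => hLE j j.isLt⟩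

lemma G_iterate_append (N : ℕ) (C : Conf N) (P : List ℤ) (F : Stream' ℤ) :
    (G N)^[P.length] (C, P ++ₛ F) = (folds N C P, F) := by
  induction P generalizing C with
  | nil => rfl
  | cons k P ih => exact ih (foldMap N k C)

lemma validSeq_append {N : ℕ} {L : List ℤ} {F : ℕ → ℤ} (hL : ∀ k ∈ L, |k| ≤ (N : ℤ))
    (hF : validSeq N F) : validSeq N (L ++ₛ F) := by
  intro k
  rcases lt_or_ge k L.length with hk | hk
  · rw [show (L ++ₛ F) k = L[k] from Stream'.get_append_left k L F hk]
    exact hL _ (List.getElem_mem hk)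
  · obtain ⟨j, rfl⟩ := Nat.exists_eq_add_of_le hk
    rw [show (L ++ₛ F) (L.length + j) = F j from Stream'.get_append_right j L F]
    exact hF j

lemma abs_le_of_mem_take {N m : ℕ} {F : Stream' ℤ} (hF : validSeq N F) :
    ∀ k ∈ Stream'.take m F, |k| ≤ (N : ℤ) := by
  intro k hk
  obtain ⟨i, hi, rfl⟩ := List.getElem_of_mem hk
  rw [Stream'.take_get]
  exact hF i

lemma get_take_append_append_stream {α : Type*} {m k : ℕ} (F : Stream' α) (L : List α)
    (S : Stream' α) (hk : k < m) : (Stream'.take m F ++ L ++ₛ S).get k = F.get k := by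
  rw [Stream'.append_append_stream, Stream'.get_append_left k _ _ (by simpa using hk),
    Stream'.take_get]

lemma dC_self (N : ℕ) (C : Conf N) : dC N C C = 0 := by
  simp [dC, delta]

lemma tsum_div_ten_pow_le {a : ℕ → ℝ} {B : ℝ} {m : ℕ} (h0 : ∀ k, 0 ≤ a k)
    (hB : ∀ k, a k ≤ B) (hm : ∀ k < m, a k = 0) :
    ∑' k, a k / 10 ^ (k + 1) ≤ B / 9 * (1 / 10) ^ m := by
  have hgeom : Summable fun k : ℕ => (1 / 10 : ℝ) ^ k :=
    summable_geometric_of_lt_one (by norm_num) (by norm_num)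
  have hsum : Summable fun k => a k / 10 ^ (k + 1) := by
    refine (hgeom.mul_left (B / 10)).of_nonneg_of_le (fun k => by have := h0 k; positivity)
      fun k => ?_
    rw [div_le_iff₀ (by positivity)]
    calc a k ≤ B := hB k
      _ = B / 10 * (1 / 10) ^ k * 10 ^ (k + 1) := by rw [one_div_pow, pow_succ]; field_simp
  have hhead : ∑ k ∈ Finset.range m, a k / 10 ^ (k + 1) = 0 :=
    Finset.sum_eq_zero fun k hk => by rw [hm k (Finset.mem_range.1 hk), zero_div]
  rw [← hsum.sum_add_tsum_nat_add m, hhead, zero_add]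
  calc ∑' k, a (k + m) / 10 ^ (k + m + 1)
      ≤ ∑' k, B / 10 ^ (m + 1) * (1 / 10) ^ k := by
        refine (hsum.comp_injective (add_left_injective m)).tsum_le_tsum (fun k => ?_)
          (hgeom.mul_left _)
        calc a (k + m) / 10 ^ (k + m + 1) ≤ B / 10 ^ (k + m + 1) := by gcongr; exact hB _
          _ = B / 10 ^ (m + 1) * (1 / 10) ^ k := by
            rw [one_div_pow, pow_add, pow_add]
            field_simp
            ring
    _ = B / 9 * (1 / 10) ^ m := by
        rw [tsum_mul_left, tsum_geometric_of_lt_one (by norm_num) (by norm_num), one_div_pow,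
          pow_succ]
        field_simp
        norm_num

lemma dF_le_of_forall_lt_eq {N m : ℕ} {F F' : ℕ → ℤ} (hF : validSeq N F)
    (hF' : validSeq N F') (h : ∀ k < m, F k = F' k) : dF N F F' ≤ (1 / 10) ^ m := by
  have hbound : ∀ k, |(F k : ℝ) - F' k| ≤ 2 * N := fun k => by
    have := abs_sub (F k) (F' k)
    have := hF k
    have := hF' k
    exact_mod_cast (by omega : |F k - F' k| ≤ 2 * (N : ℤ))
  have htsum := tsum_div_ten_pow_le (fun k => abs_nonneg _) hbound
    (fun k hk => by rw [h k hk, sub_self, abs_zero])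
  calc dF N F F' ≤ 9 / (2 * N) * (2 * N / 9 * (1 / 10) ^ m) :=
        mul_le_mul_of_nonneg_left htsum (by positivity)
    _ = (2 * N) / (2 * N) * (1 / 10 : ℝ) ^ m := by ring
    _ ≤ (1 / 10) ^ m := mul_le_of_le_one_left (by positivity) (div_self_le_one _)

theorem G_strongly_transitive_general (N : ℕ) :
    ∀ XA XB : Conf N × (ℕ → ℤ), inX N XA → inX N XB → ∀ r > (0 : ℝ),
      ∃ X : Conf N × (ℕ → ℤ), inX N X ∧ distX N X XA ≤ r ∧
        ∃ n : ℕ, (G N)^[n] X = XB := by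
  rintro ⟨CA, FA⟩ ⟨CB, FB⟩ ⟨hCA, hFA⟩ ⟨-, hFB⟩ r hr
  obtain ⟨m, hm⟩ := exists_pow_lt_of_lt_one hr (by norm_num : (1 / 10 : ℝ) < 1)
  obtain ⟨L, hL, hLfold⟩ := exists_folds_eq N (folds N CA (Stream'.take m FA)) CB
  obtain ⟨F, hF⟩ : ∃ F : ℕ → ℤ, F = Stream'.take m FA ++ L ++ₛ FB := ⟨_, rfl⟩
  have hFvalid : validSeq N F :=
    hF ▸ validSeq_append (List.forall_mem_append.2 ⟨abs_le_of_mem_take hFA, hL⟩) hFB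
  have hprefix : ∀ k < m, F k = FA k := fun k hk =>
    hF ▸ get_take_append_append_stream FA L FB hk
  refine ⟨(CA, F), ⟨hCA, hFvalid⟩, ?_, (Stream'.take m FA ++ L).length, ?_⟩
  · calc distX N (CA, F) (CA, FA) = dF N F FA := by simp [distX, dC_self]
      _ ≤ r := (dF_le_of_forall_lt_eq hFvalid hFA hprefix).trans hm.le
  · rw [hF, ← hLfold, ← folds_append]
    exact G_iterate_append N CA _ FB

/-- `G` is strongly transitive on `X = 𝔠_N × ⟦−N,N⟧^ℕ`: any point
of `X` can be reached from a point arbitrarily close to any given point of `X`. -/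
theorem G_strongly_transitive (N : ℕ) (hN : 1 ≤ N) :
    ∀ XA XB : Conf N × (ℕ → ℤ), inX N XA → inX N XB → ∀ r > (0 : ℝ),
      ∃ X : Conf N × (ℕ → ℤ), inX N X ∧ distX N X XA ≤ r ∧
        ∃ n : ℕ, (G N)^[n] X = XB :=
  G_strongly_transitive_general N

end HP
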